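/- arXiv:2311.11939 — 2 statements merged into one kernel-verified Lean document; each statement's English description precedes it below -/
import Mathlib

section
/- Let Y be a gamma random variable with shape parameter k₁ + k₂ and rate λ > 0, and let Z be a beta random variable with parameters k₁ and k₂, independent of Y, where k₁, k₂ > 0. Then the product Z·Y is a gamma random variable with shape parameter k₁ and rate λ. -/
/-!
Conditionally on `Z = z`, the product `z * Y` has law `Gamma(k₁ + k₂, λ / z)`, so `Z * Y` has
density `x ↦ ∫₀¹ β(z) γ_{k₁+k₂, λ/z}(x) dz`. The substitution `u = z⁻¹ - 1` turns this integral
into `e^{-λx}` times a Gamma integral in `u` of shape `k₂` and rate `λx`, and evaluating it gives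
the `Gamma(k₁, λ)` density.
-/

open MeasureTheory ProbabilityTheory

/-- The Beta function `B(a, b) = Γ(a) Γ(b) / Γ(a + b)`. -/
noncomputable def betaFun (a b : ℝ) : ℝ :=
  Real.Gamma a * Real.Gamma b / Real.Gamma (a + b)

/-- The probability density function of the beta distribution with parameters `a, b`,
supported on `[0, 1]`. -/
noncomputable def betaPDFReal (a b x : ℝ) : ℝ :=
  if 0 ≤ x ∧ x ≤ 1 then x ^ (a - 1) * (1 - x) ^ (b - 1) / betaFun a b else 0

/-- The beta distribution (measure) with parameters `a, b`. -/
noncomputable def betaMeasure (a b : ℝ) : Measure ℝ :=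
  volume.withDensity (fun x => ENNReal.ofReal (_root_.betaPDFReal a b x))

open Real Set
open scoped ENNReal

namespace MeasureTheory.Measure

variable {α β γ : Type*} [MeasurableSpace α] [MeasurableSpace β] [MeasurableSpace γ]

theorem map_uncurry_prod_eq_withDensity {μ : Measure α} {ν : Measure β} {ρ : Measure γ}
    [SFinite μ] [SFinite ν] [SFinite ρ] {op : α → β → γ} (hop : Measurable (Function.uncurry op))
    {g : α → γ → ℝ≥0∞} (hg : Measurable (Function.uncurry g))
    (h : ∀ᵐ a ∂μ, ν.map (op a) = ρ.withDensity (g a)) :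
    (μ.prod ν).map (Function.uncurry op) = ρ.withDensity (fun c => ∫⁻ a, g a c ∂μ) := by
  ext s hs
  rw [map_apply hop hs, prod_apply (hop hs), withDensity_apply _ hs,
    ← lintegral_lintegral_swap hg.aemeasurable]
  refine lintegral_congr_ae (h.mono fun a ha => ?_)
  dsimp only
  rw [← withDensity_apply _ hs, ← ha, map_apply (hop.of_uncurry_left) hs]
  rfl

end MeasureTheory.Measure

theorem Real.map_withDensity_const_mul {f : ℝ → ℝ≥0∞} {c : ℝ} (hc : c ≠ 0) :
    (volume.withDensity f).map (c * ·)
      = volume.withDensity (fun x => ENNReal.ofReal |c⁻¹| * f (c⁻¹ * x)) := by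
  ext s hs
  have hmul : Measurable (c * ·) := measurable_const_mul c
  rw [Measure.map_apply hmul hs, withDensity_apply _ hs, withDensity_apply _ (hmul hs),
    lintegral_const_mul' _ _ ENNReal.ofReal_ne_top, ← smul_eq_mul, ← lintegral_smul_measure,
    ← Measure.restrict_smul, ← Real.map_volume_mul_left hc, Measure.restrict_map hmul hs,
    (measurableEmbedding_mulLeft₀ hc).lintegral_map]
  simp [inv_mul_cancel_left₀ hc]

theorem ProbabilityTheory.ofReal_inv_mul_gammaPDF_inv_mul {a r c : ℝ} (hr : 0 ≤ r) (hc : 0 < c)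
    (x : ℝ) : ENNReal.ofReal |c⁻¹| * gammaPDF a r (c⁻¹ * x) = gammaPDF a (r / c) x := by
  rcases lt_or_ge x 0 with hx | hx
  · rw [gammaPDF_of_neg hx, gammaPDF_of_neg (mul_neg_of_pos_of_neg (inv_pos.2 hc) hx), mul_zero]
  rw [gammaPDF_of_nonneg hx, gammaPDF_of_nonneg (by positivity),
    ← ENNReal.ofReal_mul (abs_nonneg _), abs_of_pos (inv_pos.2 hc)]
  congr 1
  rw [mul_rpow (inv_nonneg.2 hc.le) hx, inv_rpow hc.le, rpow_sub_one hc.ne', div_rpow hr hc.le]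
  have : 0 < c ^ a := rpow_pos_of_pos hc a
  field_simp

theorem ProbabilityTheory.gammaMeasure_map_const_mul {a r c : ℝ} (hr : 0 ≤ r) (hc : 0 < c) :
    (gammaMeasure a r).map (c * ·) = gammaMeasure a (r / c) := by
  rw [gammaMeasure, Real.map_withDensity_const_mul hc.ne']
  simp_rw [ofReal_inv_mul_gammaPDF_inv_mul hr hc]
  rfl

theorem ProbabilityTheory.measurable_gammaPDF_div (a r : ℝ) :
    Measurable (Function.uncurry fun z x => gammaPDF a (r / z) x) :=
  (Measurable.ite (measurable_snd measurableSet_Ici) (by fun_prop) measurable_const).ennreal_ofReal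

instance (a r : ℝ) : SigmaFinite (gammaMeasure a r) :=
  SigmaFinite.withDensity_ofReal _

theorem betaFun_pos {a b : ℝ} (ha : 0 < a) (hb : 0 < b) : 0 < betaFun a b :=
  div_pos (mul_pos (Gamma_pos_of_pos ha) (Gamma_pos_of_pos hb)) (Gamma_pos_of_pos (add_pos ha hb))

theorem measurable_betaPDFReal (a b : ℝ) : Measurable (_root_.betaPDFReal a b) :=
  Measurable.ite (measurableSet_Icc (a := (0:ℝ)) (b := 1)) (by fun_prop) measurable_const

instance (a b : ℝ) : SigmaFinite (_root_.betaMeasure a b) :=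
  SigmaFinite.withDensity_ofReal _

theorem ae_mem_Ioo_betaMeasure (a b : ℝ) : ∀ᵐ z ∂(_root_.betaMeasure a b), z ∈ Ioo 0 1 := by
  rw [_root_.betaMeasure, ae_withDensity_iff (_root_.measurable_betaPDFReal a b).ennreal_ofReal]
  filter_upwards [Measure.ae_ne volume 0, Measure.ae_ne volume 1] with z h0 h1 hz
  have hz01 : 0 ≤ z ∧ z ≤ 1 := by
    by_contra h
    simp [_root_.betaPDFReal, h] at hz
  exact ⟨hz01.1.lt_of_ne' h0, hz01.2.lt_of_ne h1⟩

theorem image_inv_sub_one_Ioo : (fun z : ℝ => z⁻¹ - 1) '' Ioo 0 1 = Ioi 0 := by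
  ext u
  constructor
  · rintro ⟨z, ⟨hz0, hz1⟩, rfl⟩
    simpa using (one_lt_inv₀ hz0).2 hz1
  · intro (hu : 0 < u)
    refine ⟨(1 + u)⁻¹, ⟨by positivity, inv_lt_one_of_one_lt₀ (by linarith)⟩, by simp⟩

theorem lintegral_Ioi_eq_lintegral_Ioo_inv_sub_one (g : ℝ → ℝ≥0∞) :
    ∫⁻ u in Ioi 0, g u = ∫⁻ z in Ioo 0 1, ENNReal.ofReal (z ^ 2)⁻¹ * g (z⁻¹ - 1) := by
  rw [← image_inv_sub_one_Ioo, lintegral_image_eq_lintegral_abs_deriv_mul measurableSet_Ioo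
    (fun z hz => ((hasDerivAt_inv hz.1.ne').sub_const 1).hasDerivWithinAt)
    (fun z₁ _ z₂ _ h => inv_injective (sub_left_inj.1 h))]
  refine setLIntegral_congr_fun measurableSet_Ioo fun z _ => ?_
  rw [abs_neg, abs_of_nonneg (by positivity)]

theorem lintegral_Ioi_rpow_mul_exp_neg_mul {b r : ℝ} (hb : 0 < b) (hr : 0 < r) :
    ∫⁻ t in Ioi 0, ENNReal.ofReal (t ^ (b - 1) * exp (-(r * t)))
      = ENNReal.ofReal ((1 / r) ^ b * Gamma b) := by
  have hint : IntegrableOn (fun t : ℝ => t ^ (b - 1) * exp (-(r * t))) (Ioi 0) := by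
    simpa [neg_mul] using
      integrableOn_rpow_mul_exp_neg_mul_rpow (p := 1) (s := b - 1) (by linarith) one_pos hr
  rw [← integral_rpow_mul_exp_neg_mul_Ioi hb hr, ofReal_integral_eq_lintegral_ofReal hint]
  filter_upwards [self_mem_ae_restrict measurableSet_Ioi] with t (ht : 0 < t)
  positivity

theorem betaPDFReal_mul_gammaPDFReal_div {k₁ k₂ lam x z : ℝ} (hlam : 0 < lam) (hx : 0 < x)
    (hz : z ∈ Ioo 0 1) :
    _root_.betaPDFReal k₁ k₂ z * gammaPDFReal (k₁ + k₂) (lam / z) x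
      = (z ^ 2)⁻¹ * (lam ^ (k₁ + k₂) * x ^ (k₁ + k₂ - 1) * exp (-(lam * x))
          / (betaFun k₁ k₂ * Gamma (k₁ + k₂)))
        * ((z⁻¹ - 1) ^ (k₂ - 1) * exp (-(lam * x * (z⁻¹ - 1)))) := by
  obtain ⟨hz0, hz1⟩ := hz
  have h1z : 0 < 1 - z := by linarith
  have hzpow : z ^ (k₁ + k₂) = z ^ (k₁ - 1) * z ^ (k₂ - 1) * z ^ 2 := by
    rw [← rpow_two, ← rpow_add hz0, ← rpow_add hz0]; ring_nf
  have hexp : exp (-(lam / z * x)) = exp (-(lam * x)) * exp (-(lam * x * (z⁻¹ - 1))) := by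
    rw [← exp_add]; congr 1; field_simp; ring
  rw [_root_.betaPDFReal, if_pos ⟨hz0.le, hz1.le⟩, gammaPDFReal, if_pos hx.le,
    div_rpow hlam.le hz0.le, hzpow, hexp, show z⁻¹ - 1 = (1 - z) / z by field_simp,
    div_rpow h1z.le hz0.le]
  have : 0 < z ^ (k₁ - 1) := rpow_pos_of_pos hz0 _
  have : 0 < z ^ (k₂ - 1) := rpow_pos_of_pos hz0 _
  field_simp

theorem lintegral_betaPDF_mul_gammaPDF_div {k₁ k₂ lam x : ℝ} (hk₁ : 0 < k₁) (hk₂ : 0 < k₂)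
    (hlam : 0 < lam) (hx : 0 < x) :
    ∫⁻ z in Ioo 0 1, ENNReal.ofReal (_root_.betaPDFReal k₁ k₂ z) * gammaPDF (k₁ + k₂) (lam / z) x
      = gammaPDF k₁ lam x := by
  have := betaFun_pos hk₁ hk₂
  set C := lam ^ (k₁ + k₂) * x ^ (k₁ + k₂ - 1) * exp (-(lam * x))
    / (betaFun k₁ k₂ * Gamma (k₁ + k₂)) with hC
  have hC0 : 0 ≤ C := by positivity
  calc _ = ∫⁻ z in Ioo 0 1, ENNReal.ofReal C * (ENNReal.ofReal (z ^ 2)⁻¹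
          * ENNReal.ofReal ((z⁻¹ - 1) ^ (k₂ - 1) * exp (-(lam * x * (z⁻¹ - 1))))) := by
        refine setLIntegral_congr_fun measurableSet_Ioo fun z hz => ?_
        rw [gammaPDF,
          ← ENNReal.ofReal_mul' (gammaPDFReal_nonneg (by linarith) (div_pos hlam hz.1) x),
          betaPDFReal_mul_gammaPDFReal_div hlam hx hz, mul_comm _ C, mul_assoc C,
          ENNReal.ofReal_mul hC0, ENNReal.ofReal_mul (by positivity)]
    _ = ENNReal.ofReal C * ∫⁻ u in Ioi 0, ENNReal.ofReal (u ^ (k₂ - 1) * exp (-(lam * x * u))) := by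
        rw [lintegral_Ioi_eq_lintegral_Ioo_inv_sub_one,
          lintegral_const_mul' _ _ ENNReal.ofReal_ne_top]
    _ = gammaPDF k₁ lam x := by
        rw [lintegral_Ioi_rpow_mul_exp_neg_mul hk₂ (by positivity), ← ENNReal.ofReal_mul hC0,
          gammaPDF_of_nonneg hx.le, hC, betaFun, rpow_add hlam, one_div, inv_rpow (by positivity),
          mul_rpow hlam.le hx.le, show k₁ + k₂ - 1 = k₁ - 1 + k₂ by ring, rpow_add hx]
        have := Gamma_pos_of_pos hk₁
        have := Gamma_pos_of_pos hk₂
        have : 0 < lam ^ k₂ := rpow_pos_of_pos hlam _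
        have : 0 < x ^ k₂ := rpow_pos_of_pos hx _
        field_simp

theorem map_mul_prod_betaMeasure_gammaMeasure {k₁ k₂ lam : ℝ} (hk₁ : 0 < k₁) (hk₂ : 0 < k₂)
    (hlam : 0 < lam) :
    ((_root_.betaMeasure k₁ k₂).prod (gammaMeasure (k₁ + k₂) lam)).map (fun p => p.1 * p.2)
      = gammaMeasure k₁ lam := by
  have hmix := Measure.map_uncurry_prod_eq_withDensity (op := (· * ·)) (by fun_prop)
    (measurable_gammaPDF_div (k₁ + k₂) lam)
    ((ae_mem_Ioo_betaMeasure k₁ k₂).mono fun z hz => gammaMeasure_map_const_mul hlam.le hz.1)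
  refine hmix.trans (withDensity_congr_ae ?_)
  filter_upwards [Measure.ae_ne volume 0] with x hx
  rw [← Measure.restrict_eq_self_of_ae_mem (ae_mem_Ioo_betaMeasure k₁ k₂), _root_.betaMeasure,
    setLIntegral_withDensity_eq_setLIntegral_mul _
      (_root_.measurable_betaPDFReal k₁ k₂).ennreal_ofReal
      (measurable_gammaPDF_div (k₁ + k₂) lam).of_uncurry_right
      measurableSet_Ioo]
  rcases hx.lt_or_gt with hneg | hpos
  · simp [gammaPDF_of_neg hneg]
  · exact lintegral_betaPDF_mul_gammaPDF_div hk₁ hk₂ hlam hpos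

theorem beta_thinned_gamma_general
    {Ω : Type*} [MeasurableSpace Ω] (P : Measure Ω)
    (Y Z : Ω → ℝ) (k₁ k₂ lam : ℝ)
    (hk₁ : 0 < k₁) (hk₂ : 0 < k₂) (hlam : 0 < lam)
    (hY : Measurable Y) (hZ : Measurable Z)
    (hindep : IndepFun Z Y P)
    (hdY : P.map Y = gammaMeasure (k₁ + k₂) lam)
    (hdZ : P.map Z = _root_.betaMeasure k₁ k₂) :
    P.map (fun ω => Z ω * Y ω) = gammaMeasure k₁ lam := by
  have hlaw : P.map (fun ω => (Z ω, Y ω))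
      = (_root_.betaMeasure k₁ k₂).prod (gammaMeasure (k₁ + k₂) lam) := by
    rw [← hdZ, ← hdY]
    exact (indepFun_iff_map_prod_eq_prod_map_map' hZ.aemeasurable hY.aemeasurable
      (by rw [hdZ]; infer_instance) (by rw [hdY]; infer_instance)).1 hindep
  rw [← map_mul_prod_betaMeasure_gammaMeasure hk₁ hk₂ hlam, ← hlaw,
    Measure.map_map (by fun_prop) (by fun_prop)]
  rfl

/-- beta-thinned gamma random variable.  Let `Y` be a gamma random
variable with shape parameter `k₁ + k₂` and rate `lam > 0`, and let `Z` be a beta random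
variable with parameters `k₁` and `k₂`, independent of `Y`, where `k₁, k₂ > 0`.  Then the
product `Z * Y` is a gamma random variable with shape parameter `k₁` and rate `lam`. -/
theorem beta_thinned_gamma
    {Ω : Type*} [MeasurableSpace Ω] (P : Measure Ω) [IsProbabilityMeasure P]
    (Y Z : Ω → ℝ) (k₁ k₂ lam : ℝ)
    (hk₁ : 0 < k₁) (hk₂ : 0 < k₂) (hlam : 0 < lam)
    (hY : Measurable Y) (hZ : Measurable Z)
    (hindep : IndepFun Z Y P)
    (hdY : P.map Y = gammaMeasure (k₁ + k₂) lam)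
    (hdZ : P.map Z = _root_.betaMeasure k₁ k₂) :
    P.map (fun ω => Z ω * Y ω) = gammaMeasure k₁ lam :=
  beta_thinned_gamma_general P Y Z k₁ k₂ lam hk₁ hk₂ hlam hY hZ hindep hdY hdZ
end

section
/- Fix μ > 0 and for k > 1 let H(k) = k + log Γ(k) + (1−k)ψ(k) − log(k/μ) be the differential entropy of the gamma random variable with shape parameter k and rate λ = k/μ (so that the mean equals μ), where ψ = (log Γ)′ is the digamma function. Then H is strictly decreasing on (1, ∞); that is, H′(k) = 1 + ψ′(k)(1−k) − 1/k < 0 for all k > 1. -/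
open MeasureTheory Real

/-- The digamma function `ψ = (log Γ)′`. -/
noncomputable def digamma (x : ℝ) : ℝ :=
  deriv (fun t : ℝ => Real.log (Real.Gamma t)) x

/-- The trigamma function `ψ′`. -/
noncomputable def trigamma (x : ℝ) : ℝ :=
  deriv digamma x

/-!
The derivative of the entropy is `1 + ψ′(k)(1 - k) - 1/k = (ψ′(k) - 1/k)(1 - k)`, so everything
rests on `ψ′(x) > 1/x`. The recursion `ψ(x + 1) = ψ(x) + 1/x` gives
`ψ′(x) - 1/x = 1/(x²(x + 1)) + (ψ′(x + 1) - 1/(x + 1))`,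
so `n ↦ ψ′(x + n) - 1/(x + n)` is antitone. As `ψ′ ≥ 0` by the convexity of `log Γ`, its terms
are bounded below by `-1/(x + n) → 0`, whence `ψ′(x) - 1/x ≥ 0`, and one more step of the
recursion makes it strict.
-/

open Filter Set Topology

/-- The differential entropy of the gamma distribution with shape `k` and rate `r`. -/
noncomputable def gammaEntropy (k r : ℝ) : ℝ :=
  k + log (Gamma k) + (1 - k) * digamma k - log r

lemma Real.analyticAt_Gamma {x : ℝ} (hx : 0 < x) : AnalyticAt ℝ Gamma x := by
  have hC : AnalyticAt ℂ Complex.Gamma (x : ℂ) := by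
    refine DifferentiableOn.analyticAt (s := {z : ℂ | 0 < z.re}) (fun z hz => ?_) ?_
    · refine (Complex.differentiableAt_Gamma z fun m hm => ?_).differentiableWithinAt
      have : (0 : ℝ) < -m := by simpa [hm] using hz
      linarith [m.cast_nonneg (α := ℝ)]
    · exact (isOpen_lt continuous_const Complex.continuous_re).mem_nhds (by simpa using hx)
  have hR : AnalyticAt ℝ (fun t : ℝ => (Complex.Gamma t).re) x :=
    (Complex.reCLM.analyticAt _).comp (hC.restrictScalars.comp (Complex.ofRealCLM.analyticAt x))
  exact hR.congr (Eventually.of_forall fun t => by simp [Complex.Gamma_ofReal])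

lemma analyticAt_log_Gamma {x : ℝ} (hx : 0 < x) :
    AnalyticAt ℝ (fun t => log (Gamma t)) x :=
  (analyticAt_Gamma hx).log (Gamma_pos_of_pos hx)

lemma hasDerivAt_log_Gamma {x : ℝ} (hx : 0 < x) :
    HasDerivAt (fun t => log (Gamma t)) (digamma x) x :=
  (analyticAt_log_Gamma hx).differentiableAt.hasDerivAt

lemma hasDerivAt_digamma {x : ℝ} (hx : 0 < x) : HasDerivAt digamma (trigamma x) x :=
  (analyticAt_log_Gamma hx).deriv.differentiableAt.hasDerivAt

lemma digamma_add_one {x : ℝ} (hx : 0 < x) : digamma (x + 1) = digamma x + x⁻¹ := by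
  have hlog : (fun t => log (Gamma (t + 1))) =ᶠ[𝓝 x] fun t => log (Gamma t) + log t := by
    filter_upwards [eventually_gt_nhds hx] with t ht
    rw [Gamma_add_one ht.ne', log_mul ht.ne' (Gamma_pos_of_pos ht).ne', add_comm]
  have := ((hasDerivAt_log_Gamma hx).add (hasDerivAt_log hx.ne')).congr_of_eventuallyEq hlog
  rw [digamma, ← deriv_comp_add_const, this.deriv]

lemma trigamma_add_one {x : ℝ} (hx : 0 < x) : trigamma (x + 1) = trigamma x - (x ^ 2)⁻¹ := by
  have hψ : (fun t => digamma (t + 1)) =ᶠ[𝓝 x] fun t => digamma t + t⁻¹ := by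
    filter_upwards [eventually_gt_nhds hx] with t ht using digamma_add_one ht
  have := ((hasDerivAt_digamma hx).add (hasDerivAt_inv hx.ne')).congr_of_eventuallyEq hψ
  rw [trigamma, ← deriv_comp_add_const, this.deriv, sub_eq_add_neg, neg_inv]

lemma monotoneOn_digamma : MonotoneOn digamma (Ioi 0) :=
  convexOn_log_Gamma.monotoneOn_deriv fun _ hx => (hasDerivAt_log_Gamma hx).differentiableAt

lemma trigamma_nonneg {x : ℝ} (hx : 0 < x) : 0 ≤ trigamma x := by
  rw [trigamma, ← derivWithin_of_mem_nhds (Ioi_mem_nhds hx)]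
  exact monotoneOn_digamma.derivWithin_nonneg

lemma trigamma_sub_inv_add_one {x : ℝ} (hx : 0 < x) :
    trigamma (x + 1) - (x + 1)⁻¹ = trigamma x - x⁻¹ - (x ^ 2 * (x + 1))⁻¹ := by
  rw [trigamma_add_one hx]
  field_simp
  ring

lemma antitone_trigamma_sub_inv_nat_add {x : ℝ} (hx : 0 < x) :
    Antitone fun n : ℕ => trigamma (x + n) - (x + n)⁻¹ := by
  refine antitone_nat_of_succ_le fun n => ?_
  have hxn : 0 < x + n := by positivity
  rw [Nat.cast_succ, ← add_assoc, trigamma_sub_inv_add_one hxn, sub_le_self_iff]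
  positivity

lemma inv_le_trigamma {x : ℝ} (hx : 0 < x) : x⁻¹ ≤ trigamma x := by
  have hlim : Tendsto (fun n : ℕ => -(x + n)⁻¹) atTop (𝓝 0) := by
    simpa using (tendsto_inv_atTop_zero.comp
      (tendsto_atTop_add_const_left _ x tendsto_natCast_atTop_atTop)).neg
  refine sub_nonneg.mp (le_of_tendsto hlim (Eventually.of_forall fun n => ?_))
  calc -(x + n)⁻¹ ≤ trigamma (x + n) - (x + n)⁻¹ := by
        linarith [trigamma_nonneg (by positivity : 0 < x + n)]
    _ ≤ trigamma (x + (0 : ℕ)) - (x + (0 : ℕ))⁻¹ :=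
        antitone_trigamma_sub_inv_nat_add hx n.zero_le
    _ = trigamma x - x⁻¹ := by simp

lemma inv_lt_trigamma {x : ℝ} (hx : 0 < x) : x⁻¹ < trigamma x := by
  have h := trigamma_sub_inv_add_one hx
  have : 0 < (x ^ 2 * (x + 1))⁻¹ := by positivity
  linarith [inv_le_trigamma (by positivity : 0 < x + 1)]

lemma hasDerivAt_gammaEntropy_div_const {μ k : ℝ} (hμ : μ ≠ 0) (hk : 0 < k) :
    HasDerivAt (fun k => gammaEntropy k (k / μ)) (1 + trigamma k * (1 - k) - 1 / k) k := by
  have hrate : HasDerivAt (fun t => log (t / μ)) k⁻¹ k := by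
    have := ((hasDerivAt_id k).div_const μ).log (div_ne_zero hk.ne' hμ)
    rwa [id, div_div_div_cancel_right₀ hμ, one_div] at this
  have := (((hasDerivAt_id' k).fun_add (hasDerivAt_log_Gamma hk)).fun_add
    (((hasDerivAt_id' k).const_sub 1).fun_mul (hasDerivAt_digamma hk))).fun_sub hrate
  exact this.congr_deriv (by ring)

lemma one_add_trigamma_mul_one_sub_sub_inv_neg {k : ℝ} (hk : 1 < k) :
    1 + trigamma k * (1 - k) - 1 / k < 0 := by
  have hk0 : k ≠ 0 := by positivity
  have h : 1 + trigamma k * (1 - k) - 1 / k = (trigamma k - k⁻¹) * (1 - k) := by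
    field_simp
    ring
  rw [h]
  exact mul_neg_of_pos_of_neg (sub_pos.mpr (inv_lt_trigamma (by positivity))) (by linarith)

/-- Fix `μ > 0` and for `k > 1` let
`H k = k + log Γ(k) + (1 - k) ψ(k) - log (k / μ)` be the differential entropy of the gamma
random variable with shape parameter `k` and rate `λ = k / μ` (so that the mean equals
`μ`), where `ψ = (log Γ)′` is the digamma function.  Then `H` is strictly decreasing on
`(1, ∞)`; that is, `H′(k) = 1 + ψ′(k) (1 - k) - 1 / k < 0` for all `k > 1`. -/
theorem gamma_entropy_strictAntiOn (μ : ℝ) (hμ : 0 < μ) :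
    StrictAntiOn
      (fun k : ℝ =>
        k + Real.log (Real.Gamma k) + (1 - k) * digamma k - Real.log (k / μ))
      (Set.Ioi 1) ∧
    (∀ k : ℝ, 1 < k →
      HasDerivAt
        (fun k : ℝ =>
          k + Real.log (Real.Gamma k) + (1 - k) * digamma k - Real.log (k / μ))
        (1 + trigamma k * (1 - k) - 1 / k) k) ∧
    (∀ k : ℝ, 1 < k → 1 + trigamma k * (1 - k) - 1 / k < 0) := by
  have hderiv (k : ℝ) (hk : 1 < k) :
      HasDerivAt (fun k => gammaEntropy k (k / μ)) (1 + trigamma k * (1 - k) - 1 / k) k :=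
    hasDerivAt_gammaEntropy_div_const hμ.ne' (by linarith)
  refine ⟨?_, hderiv, fun k hk => one_add_trigamma_mul_one_sub_sub_inv_neg hk⟩
  exact strictAntiOn_of_hasDerivWithinAt_neg (convex_Ioi 1)
    (fun k hk => (hderiv k hk).continuousAt.continuousWithinAt)
    (fun k hk => (hderiv k (interior_subset hk)).hasDerivWithinAt)
    fun k hk => one_add_trigamma_mul_one_sub_sub_inv_neg (interior_subset hk)
end
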